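/- Let s be a natural number, a an integer, and let b, c be integers with b ≥ max{s + 2a + 16, s + 6}. Let G be a finite simple graph and S ⊆ V(G) with |S| = s. If E(G;S,q) = a·q² − b·q + c as polynomials in q, then for every k with 1 ≤ k ≤ s, Σ_{W ⊆ S, |W| = k} |Obs(G;W)| = C(s−2, k−2) · Σ_{W ⊆ S, |W| = 2} |Obs(G;W)| + ( C(s−1, k−1) − (s−1)·C(s−2, k−2) ) · Σ_{v ∈ S} |Obs(G;{v})|, where C(·,·) denotes a binomial coefficient (equal to 0 when the lower index is negative or exceeds the upper index). -/

import Mathlib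

open Polynomial

/-- The closed neighborhood `N[S]` of a set of vertices. -/
def closedNbhd {V : Type*} (G : SimpleGraph V) (S : Set V) : Set V :=
  ⋃ v ∈ S, insert v (G.neighborSet v)

/-- A set `B` is closed under the zero forcing step: whenever `x ∈ B` has exactly one
neighbor `y` outside `B`, then `y` is already in `B`. -/
def PDClosed {V : Type*} (G : SimpleGraph V) (B : Set V) : Prop :=
  ∀ x ∈ B, ∀ y : V, G.neighborSet x \ B = {y} → y ∈ B

/-- `Obs G S` is the set of observed vertices of the power domination process started with
PMU placement `S`: the least superset of `N[S]` closed under the zero forcing step. -/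
def Obs {V : Type*} (G : SimpleGraph V) (S : Set V) : Set V :=
  ⋂₀ {B : Set V | closedNbhd G S ⊆ B ∧ PDClosed G B}

/-- The expected value polynomial
`E(G;S,q) = Σ_{W ⊆ S} |Obs(G;W)| q^{|S∖W|} (1−q)^{|W|}`. -/
noncomputable def expol {V : Type*} (G : SimpleGraph V) (S : Finset V) : Polynomial ℝ :=
  ∑ W ∈ S.powerset,
    ((Obs G ↑W).ncard : Polynomial ℝ) * X ^ (S.card - W.card) * (1 - X) ^ W.card

/-!
Write `N k = Σ_{|W| = k} |Obs(G;W)|`. Substituting `q = 1/(t+1)` turns `(t+1)^s E(G;S,q)` into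
`Σ_k N k t^k` and `a q² - b q + c` into `a (t+1)^(s-2) - b (t+1)^(s-1) + c (t+1)^s`, so
`N k = a C(s-2,k) - b C(s-1,k) + c C(s,k)`. Since `N 0 = |Obs(G;∅)| = 0` we get `c = b - a`, and
Pascal's rule gives `N (k+1) = (b-a) C(s-1,k) - a C(s-2,k)`: a two-parameter family, hence a
fixed combination of `N 1` and `N 2`.
-/

lemma obs_empty {V : Type*} (G : SimpleGraph V) : Obs G ∅ = ∅ :=
  Set.subset_empty_iff.mp <| Set.sInter_subset_of_mem
    ⟨by simp [closedNbhd], fun _ hx => absurd hx (Set.notMem_empty _)⟩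

noncomputable def obsSum {V : Type*} (G : SimpleGraph V) (S : Finset V) (k : ℕ) : ℕ :=
  ∑ W ∈ S.powersetCard k, (Obs G ↑W).ncard

lemma obsSum_zero {V : Type*} (G : SimpleGraph V) (S : Finset V) : obsSum G S 0 = 0 := by
  simp [obsSum, obs_empty]

lemma obsSum_one {V : Type*} (G : SimpleGraph V) (S : Finset V) :
    obsSum G S 1 = ∑ v ∈ S, (Obs G {v}).ncard := by
  simp [obsSum, Finset.powersetCard_one]

lemma expol_eq_sum_obsSum {V : Type*} (G : SimpleGraph V) (S : Finset V) :
    expol G S = ∑ k ∈ Finset.range (S.card + 1),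
      C (obsSum G S k : ℝ) * X ^ (S.card - k) * (1 - X) ^ k := by
  rw [expol, Finset.sum_powerset]
  refine Finset.sum_congr rfl fun k _ => ?_
  simp only [obsSum, Nat.cast_sum, map_sum, Finset.sum_mul]
  refine Finset.sum_congr rfl fun W hW => ?_
  rw [(Finset.mem_powersetCard.mp hW).2, map_natCast]

section Substitution

variable {t : ℝ} (ht : t + 1 ≠ 0)
include ht

lemma pow_mul_eval_inv_sum_X_pow_mul_one_sub_pow (N : ℕ → ℝ) (n : ℕ) :
    (t + 1) ^ n * (∑ k ∈ Finset.range (n + 1), C (N k) * X ^ (n - k) * (1 - X) ^ k).eval (t + 1)⁻¹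
      = (∑ k ∈ Finset.range (n + 1), C (N k) * X ^ k).eval t := by
  simp only [eval_finsetSum, eval_mul, eval_C, eval_pow, eval_X, eval_sub, eval_one,
    Finset.mul_sum]
  refine Finset.sum_congr rfl fun k hk => ?_
  have hkn : k ≤ n := Nat.lt_succ_iff.mp (Finset.mem_range.mp hk)
  have hcancel : (t + 1) ^ n * ((t + 1)⁻¹ ^ (n - k) * (t + 1)⁻¹ ^ k) = 1 := by
    rw [← pow_add, Nat.sub_add_cancel hkn, inv_pow, mul_inv_cancel₀ (pow_ne_zero _ ht)]
  have hsub : 1 - (t + 1)⁻¹ = t * (t + 1)⁻¹ := by field_simp; ring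
  rw [hsub, mul_pow]
  linear_combination (N k * t ^ k) * hcancel

lemma pow_mul_eval_inv_quadratic {n : ℕ} (hn : 2 ≤ n) (a b c : ℝ) :
    (t + 1) ^ n * (C a * X ^ 2 - C b * X + C c).eval (t + 1)⁻¹
      = (C a * (X + 1) ^ (n - 2) - C b * (X + 1) ^ (n - 1) + C c * (X + 1) ^ n).eval t := by
  simp only [eval_add, eval_sub, eval_mul, eval_C, eval_pow, eval_X, eval_one]
  rw [pow_sub₀ _ ht hn, pow_sub₀ _ ht (by omega : 1 ≤ n)]
  field_simp

end Substitution

lemma eq_choose_of_sum_X_pow_mul_one_sub_pow_eq_quadratic {N : ℕ → ℝ} {n : ℕ} (hn : 2 ≤ n)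
    {a b c : ℝ}
    (h : ∑ k ∈ Finset.range (n + 1), C (N k) * X ^ (n - k) * (1 - X) ^ k
      = C a * X ^ 2 - C b * X + C c)
    {k : ℕ} (hk : k ≤ n) :
    N k = a * (n - 2).choose k - b * (n - 1).choose k + c * n.choose k := by
  have hpoly : ∑ k ∈ Finset.range (n + 1), C (N k) * X ^ k
      = C a * (X + 1) ^ (n - 2) - C b * (X + 1) ^ (n - 1) + C c * (X + 1) ^ n := by
    refine eq_of_infinite_eval_eq _ _ ((Set.Ioi_infinite 0).mono fun t (ht : 0 < t) => ?_)
    have ht' : t + 1 ≠ 0 := by positivity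
    rw [Set.mem_ofPred_eq, ← pow_mul_eval_inv_sum_X_pow_mul_one_sub_pow ht', h,
      pow_mul_eval_inv_quadratic ht' hn]
  simpa [finsetSum_coeff, coeff_C_mul_X_pow, coeff_X_add_one_pow, Nat.lt_succ_iff.mpr hk]
    using congrArg (coeff · k) hpoly

lemma choose_pascal_combination (a b : ℤ) (m j : ℕ) :
    a * m.choose (j + 1) - b * (m + 1).choose (j + 1) + (b - a) * (m + 2).choose (j + 1)
      = (b - a) * (m + 1).choose j - a * m.choose j := by
  rw [Nat.choose_succ_succ' (m + 1), Nat.choose_succ_succ' m]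
  push_cast
  ring

lemma eq_choose_combination_of_eq_quadratic_choose {N : ℕ → ℤ} {m : ℕ} {a b c : ℤ}
    (hN : ∀ k ≤ m + 2, N k = a * m.choose k - b * (m + 1).choose k + c * (m + 2).choose k)
    (h0 : N 0 = 0) {j : ℕ} (hj : j ≤ m) :
    N (j + 2) = m.choose j * N 2 + ((m + 1).choose (j + 1) - (m + 1) * m.choose j) * N 1 := by
  have hc : c = b - a := by
    have := hN 0 (Nat.zero_le _)
    simp only [h0, Nat.choose_zero_right, Nat.cast_one, mul_one] at this
    linarith
  have hform : ∀ i ≤ m + 1, N (i + 1) = (b - a) * (m + 1).choose i - a * m.choose i := by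
    intro i hi
    rw [hN (i + 1) (by omega), hc, choose_pascal_combination]
  rw [hform (j + 1) (by omega), hform 1 (by omega), hform 0 (by omega),
    Nat.choose_succ_succ' m j]
  simp only [Nat.choose_one_right, Nat.choose_zero_right]
  push_cast
  ring

theorem stmt5_general {V : Type} (G : SimpleGraph V) (S : Finset V)
    (s : ℕ) (hs : S.card = s) (a b c : ℤ)
    (hE : expol G S = Polynomial.C (a : ℝ) * X ^ 2 - Polynomial.C (b : ℝ) * X
            + Polynomial.C (c : ℝ)) :
    ∀ k, 1 ≤ k → k ≤ s →
      (∑ W ∈ Finset.powersetCard k S, ((Obs G ↑W).ncard : ℤ))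
        = (if 2 ≤ k then (((s - 2).choose (k - 2) : ℕ) : ℤ) else 0)
              * (∑ W ∈ Finset.powersetCard 2 S, ((Obs G ↑W).ncard : ℤ))
          + ((((s - 1).choose (k - 1) : ℕ) : ℤ)
                - ((s : ℤ) - 1) * (if 2 ≤ k then (((s - 2).choose (k - 2) : ℕ) : ℤ) else 0))
              * (∑ v ∈ S, ((Obs G {v}).ncard : ℤ)) := by
  intro k hk1 hks
  have hcast : ∀ k, ∑ W ∈ Finset.powersetCard k S, ((Obs G ↑W).ncard : ℤ) = obsSum G S k := by
    simp [obsSum]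
  have hsingle : ∑ v ∈ S, ((Obs G {v}).ncard : ℤ) = obsSum G S 1 := by simp [obsSum_one]
  rw [hcast, hcast, hsingle]
  obtain rfl | hk2 : k = 1 ∨ 2 ≤ k := by omega
  · simp
  obtain ⟨m, rfl⟩ : ∃ m, s = m + 2 := ⟨s - 2, by omega⟩
  obtain ⟨j, rfl⟩ : ∃ j, k = j + 2 := ⟨k - 2, by omega⟩
  rw [expol_eq_sum_obsSum, hs] at hE
  have hquad : ∀ k ≤ m + 2, (obsSum G S k : ℤ)
      = a * m.choose k - b * (m + 1).choose k + c * (m + 2).choose k := fun k hk => by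
    exact_mod_cast eq_choose_of_sum_X_pow_mul_one_sub_pow_eq_quadratic (by omega) hE hk
  rw [if_pos hk2, eq_choose_combination_of_eq_quadratic_choose hquad
    (by exact_mod_cast obsSum_zero G S) (by omega)]
  push_cast
  ring

theorem stmt5 {V : Type} [Fintype V] (G : SimpleGraph V) (S : Finset V)
    (s : ℕ) (hs : S.card = s) (a b c : ℤ)
    (hb : max ((s : ℤ) + 2 * a + 16) ((s : ℤ) + 6) ≤ b)
    (hE : expol G S = Polynomial.C (a : ℝ) * X ^ 2 - Polynomial.C (b : ℝ) * X
            + Polynomial.C (c : ℝ)) :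
    ∀ k, 1 ≤ k → k ≤ s →
      (∑ W ∈ Finset.powersetCard k S, ((Obs G ↑W).ncard : ℤ))
        = (if 2 ≤ k then (((s - 2).choose (k - 2) : ℕ) : ℤ) else 0)
              * (∑ W ∈ Finset.powersetCard 2 S, ((Obs G ↑W).ncard : ℤ))
          + ((((s - 1).choose (k - 1) : ℕ) : ℤ)
                - ((s : ℤ) - 1) * (if 2 ≤ k then (((s - 2).choose (k - 2) : ℕ) : ℤ) else 0))
              * (∑ v ∈ S, ((Obs G {v}).ncard : ℤ)) :=
  stmt5_general G S s hs a b c hE
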